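/- Let w : ℝ → [0,∞) be locally integrable with w(λ) ≤ C(1+|λ|) for all λ, and let φ(s) = e^{−ts} for t > 0. Then sup_{α>0} α (∫_{{λ : e^{−t(1+λ²)/4} > α}} w(λ) dλ)^{δ} ≤ C' e^{−t/4} max( sup_{0<x≤1/2} e^{−tx²} x^{δ}, sup_{x≥1/2} e^{−tx²} x^{2δ} ) for any δ ∈ (0,1), where C' depends only on C and δ. -/

import Mathlib

open Real Set MeasureTheory

/-!
Write the level as `α = e^{-t/4} e^{-t x²}` with `x > 0` (levels `α ≥ e^{-t/4}` give an empty
superlevel set). The superlevel set of `e^{-t(1+λ²)/4}` is then `(-2x, 2x)`, on which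
`w ≤ C(1 + 2x)`, so the integral is at most `C(1 + 2x) · 4x`. This is at most `8Cx` for
`x ≤ 1/2` and `16Cx²` for `x ≥ 1/2`, which produces the two suprema.
-/

noncomputable def oddHeatMajorant (t δ : ℝ) : ℝ :=
  max (sSup ((fun x : ℝ => exp (-t * x ^ 2) * x ^ δ) '' Ioc 0 (1 / 2)))
    (sSup ((fun x : ℝ => exp (-t * x ^ 2) * x ^ (2 * δ)) '' Ici (1 / 2)))

lemma exp_neg_mul_sq_mul_rpow_le {t p x : ℝ} (ht : 0 < t) (hp : 0 ≤ p) (hx : 0 ≤ x) :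
    exp (-t * x ^ 2) * x ^ p ≤ exp (p ^ 2 / (4 * t)) := by
  have hpow : x ^ p ≤ exp (p * x) := by
    calc x ^ p ≤ exp x ^ p := rpow_le_rpow hx (by linarith [add_one_le_exp x]) hp
      _ = exp (p * x) := by rw [← exp_mul, mul_comm]
  calc exp (-t * x ^ 2) * x ^ p ≤ exp (-t * x ^ 2) * exp (p * x) := by gcongr
    _ = exp (-t * x ^ 2 + p * x) := (exp_add _ _).symm
    _ ≤ exp (p ^ 2 / (4 * t)) := by
      rw [exp_le_exp, le_div_iff₀ (by positivity)]
      nlinarith [sq_nonneg (2 * t * x - p)]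

lemma bddAbove_exp_neg_mul_sq_mul_rpow {t p : ℝ} (ht : 0 < t) (hp : 0 ≤ p) {s : Set ℝ}
    (hs : s ⊆ Ici 0) : BddAbove ((fun x : ℝ => exp (-t * x ^ 2) * x ^ p) '' s) := by
  refine ⟨exp (p ^ 2 / (4 * t)), ?_⟩
  rintro _ ⟨x, hx, rfl⟩
  exact exp_neg_mul_sq_mul_rpow_le ht hp (hs hx)

section OddHeatMajorant

variable {t δ : ℝ}

lemma le_oddHeatMajorant_of_le_half (ht : 0 < t) (hδ : 0 ≤ δ) {x : ℝ} (hx : 0 < x)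
    (hx' : x ≤ 1 / 2) : exp (-t * x ^ 2) * x ^ δ ≤ oddHeatMajorant t δ :=
  (le_csSup (bddAbove_exp_neg_mul_sq_mul_rpow ht hδ fun _ hy => hy.1.le)
    (mem_image_of_mem _ (show x ∈ Ioc 0 (1 / 2) from ⟨hx, hx'⟩))).trans (le_max_left _ _)

lemma le_oddHeatMajorant_of_half_le (ht : 0 < t) (hδ : 0 ≤ δ) {x : ℝ} (hx : 1 / 2 ≤ x) :
    exp (-t * x ^ 2) * x ^ (2 * δ) ≤ oddHeatMajorant t δ :=
  (le_csSup (bddAbove_exp_neg_mul_sq_mul_rpow ht (by positivity)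
    (Ici_subset_Ici.2 (by norm_num))) ⟨x, hx, rfl⟩).trans (le_max_right _ _)

lemma oddHeatMajorant_nonneg (ht : 0 < t) (hδ : 0 ≤ δ) : 0 ≤ oddHeatMajorant t δ :=
  (by positivity : (0 : ℝ) ≤ exp (-t * (1 / 2) ^ 2) * (1 / 2) ^ (2 * δ)).trans
    (le_oddHeatMajorant_of_half_le ht hδ le_rfl)

lemma exp_neg_mul_sq_mul_rpow_le_oddHeatMajorant (ht : 0 < t) (hδ : 0 ≤ δ) {C x : ℝ}
    (hC : 0 ≤ C) (hx : 0 < x) :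
    exp (-t * x ^ 2) * (C * (1 + 2 * x) * (4 * x)) ^ δ ≤
      (16 * C) ^ δ * oddHeatMajorant t δ := by
  rcases le_or_gt x (1 / 2) with hx' | hx'
  · have hle : C * (1 + 2 * x) * (4 * x) ≤ 16 * C * x := by
      nlinarith [mul_nonneg (mul_nonneg hC hx.le) (by linarith : (0 : ℝ) ≤ 1 / 2 - x)]
    calc exp (-t * x ^ 2) * (C * (1 + 2 * x) * (4 * x)) ^ δ
          ≤ exp (-t * x ^ 2) * (16 * C * x) ^ δ := by
            gcongr exp _ * ?_
            exact rpow_le_rpow (by positivity) hle hδ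
      _ = (16 * C) ^ δ * (exp (-t * x ^ 2) * x ^ δ) := by
            rw [mul_rpow (by positivity) hx.le]; ring
      _ ≤ (16 * C) ^ δ * oddHeatMajorant t δ := by
            gcongr; exact le_oddHeatMajorant_of_le_half ht hδ hx hx'
  · have hle : C * (1 + 2 * x) * (4 * x) ≤ 16 * C * x ^ 2 := by
      nlinarith [mul_nonneg (mul_nonneg hC hx.le) (by linarith : (0 : ℝ) ≤ 2 * x - 1)]
    calc exp (-t * x ^ 2) * (C * (1 + 2 * x) * (4 * x)) ^ δ
          ≤ exp (-t * x ^ 2) * (16 * C * x ^ 2) ^ δ := by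
            gcongr exp _ * ?_
            exact rpow_le_rpow (by positivity) hle hδ
      _ = (16 * C) ^ δ * (exp (-t * x ^ 2) * x ^ (2 * δ)) := by
            rw [mul_rpow (by positivity) (sq_nonneg x), ← rpow_natCast, ← rpow_mul hx.le]
            push_cast; ring
      _ ≤ (16 * C) ^ δ * oddHeatMajorant t δ := by
            gcongr; exact le_oddHeatMajorant_of_half_le ht hδ hx'.le

end OddHeatMajorant

lemma setOf_lt_exp_heatSymbol_eq_empty {t α : ℝ} (ht : 0 ≤ t) (hα : exp (-t / 4) ≤ α) :
    {l : ℝ | α < exp (-(t * (1 + l ^ 2) / 4))} = ∅ := by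
  refine eq_empty_of_forall_notMem fun l hl => (hl.trans_le ?_).not_ge hα
  rw [exp_le_exp]
  nlinarith [mul_nonneg ht (sq_nonneg l)]

lemma setOf_exp_mul_exp_lt_exp_heatSymbol {t x : ℝ} (ht : 0 < t) (hx : 0 ≤ x) :
    {l : ℝ | exp (-t / 4) * exp (-t * x ^ 2) < exp (-(t * (1 + l ^ 2) / 4))} =
      Ioo (-(2 * x)) (2 * x) := by
  ext l
  have hsq : l ^ 2 < (2 * x) ^ 2 ↔ l ∈ Ioo (-(2 * x)) (2 * x) := by
    rw [sq_lt_sq, abs_of_nonneg (by positivity : 0 ≤ 2 * x), mem_Ioo, abs_lt]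
  rw [mem_ofPred_eq, ← exp_add, exp_lt_exp, ← hsq]
  constructor <;> intro h <;> nlinarith

lemma exists_pos_eq_exp_mul_exp_neg_mul_sq {t α : ℝ} (ht : 0 < t) (hα : 0 < α)
    (hαt : α < exp (-t / 4)) : ∃ x > 0, exp (-t / 4) * exp (-t * x ^ 2) = α := by
  have hlog : t / 4 < -log α := by
    have := log_lt_log hα hαt
    rw [log_exp] at this
    linarith
  set y := (-log α - t / 4) / t
  have hy : 0 < y := div_pos (by linarith) ht
  refine ⟨√y, sqrt_pos.2 hy, ?_⟩
  have hlevel : -t / 4 + -t * y = log α := by simp only [y]; field_simp; ring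
  rw [← exp_add, sq_sqrt hy.le, hlevel, exp_log hα]

lemma setIntegral_Ioo_le_of_le_mul_one_add_abs {w : ℝ → ℝ} {C r : ℝ}
    (hw0 : ∀ l, 0 ≤ w l) (hwC : ∀ l, w l ≤ C * (1 + |l|)) (hr : 0 ≤ r) :
    ∫ l in Ioo (-r) r, w l ≤ C * (1 + r) * (2 * r) := by
  have hC : 0 ≤ C := by nlinarith [hw0 0, hwC 0, abs_nonneg (0 : ℝ)]
  have hbound : ∀ l ∈ Ioo (-r) r, ‖w l‖ ≤ C * (1 + r) := fun l hl => by
    rw [norm_of_nonneg (hw0 l)]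
    have : |l| ≤ r := abs_le.2 ⟨hl.1.le, hl.2.le⟩
    nlinarith [hwC l]
  have h := norm_setIntegral_le_of_norm_le_const (measure_Ioo_lt_top (μ := volume)) hbound
  rw [measureReal_def, Real.volume_Ioo, ENNReal.toReal_ofReal (by linarith), sub_neg_eq_add,
    ← two_mul] at h
  exact (le_abs_self _).trans h

theorem heat_symbol_weak_estimate_odd_general (C δ : ℝ) (hC : 0 < C) (hδ0 : 0 < δ) :
    ∃ C' : ℝ, 0 < C' ∧ ∀ (w : ℝ → ℝ) (t : ℝ), Measurable w → (∀ l, 0 ≤ w l) →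
      (∀ l : ℝ, w l ≤ C * (1 + |l|)) → 0 < t → ∀ α : ℝ, 0 < α →
      α * (∫ l in {l : ℝ | α < Real.exp (-(t * (1 + l ^ 2) / 4))}, w l) ^ δ ≤
        C' * Real.exp (-t / 4) * max
          (sSup ((fun x : ℝ => Real.exp (-t * x ^ 2) * x ^ δ) '' Set.Ioc (0 : ℝ) (1 / 2)))
          (sSup ((fun x : ℝ => Real.exp (-t * x ^ 2) * x ^ (2 * δ)) '' Set.Ici (1 / 2 : ℝ))) := by
  refine ⟨(16 * C) ^ δ, by positivity, fun w t _ hw0 hwC ht α hα => ?_⟩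
  change _ ≤ _ * _ * oddHeatMajorant t δ
  rcases le_or_gt (exp (-t / 4)) α with hαt | hαt
  · rw [setOf_lt_exp_heatSymbol_eq_empty ht.le hαt, Measure.restrict_empty,
      integral_zero_measure, zero_rpow hδ0.ne', mul_zero]
    have := oddHeatMajorant_nonneg ht hδ0.le
    positivity
  obtain ⟨x, hx, rfl⟩ := exists_pos_eq_exp_mul_exp_neg_mul_sq ht hα hαt
  rw [setOf_exp_mul_exp_lt_exp_heatSymbol ht hx.le]
  have hI : ∫ l in Ioo (-(2 * x)) (2 * x), w l ≤ C * (1 + 2 * x) * (4 * x) :=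
    (setIntegral_Ioo_le_of_le_mul_one_add_abs hw0 hwC (by positivity)).trans_eq (by ring)
  have hI0 : 0 ≤ ∫ l in Ioo (-(2 * x)) (2 * x), w l :=
    setIntegral_nonneg measurableSet_Ioo fun l _ => hw0 l
  calc exp (-t / 4) * exp (-t * x ^ 2) * (∫ l in Ioo (-(2 * x)) (2 * x), w l) ^ δ
      ≤ exp (-t / 4) * (exp (-t * x ^ 2) * (C * (1 + 2 * x) * (4 * x)) ^ δ) := by
        rw [mul_assoc]
        gcongr
    _ ≤ exp (-t / 4) * ((16 * C) ^ δ * oddHeatMajorant t δ) := by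
        gcongr exp _ * ?_
        exact exp_neg_mul_sq_mul_rpow_le_oddHeatMajorant ht hδ0.le hC.le hx
    _ = (16 * C) ^ δ * exp (-t / 4) * oddHeatMajorant t δ := by ring

/-- Heat-semigroup symbol estimate in the odd-parity case: for a weight w bounded by
C(1+|λ|), the weak quantity for the symbol e^{-t(1+λ²)/4} is bounded by
C' e^{-t/4} max(sup_{0<x≤1/2} e^{-tx²}x^δ, sup_{x≥1/2} e^{-tx²}x^{2δ}), with C' depending
only on C and δ. -/
theorem heat_symbol_weak_estimate_odd (C δ : ℝ) (hC : 0 < C) (hδ0 : 0 < δ) (hδ1 : δ < 1) :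
    ∃ C' : ℝ, 0 < C' ∧ ∀ (w : ℝ → ℝ) (t : ℝ), Measurable w → (∀ l, 0 ≤ w l) →
      (∀ l : ℝ, w l ≤ C * (1 + |l|)) → 0 < t → ∀ α : ℝ, 0 < α →
      α * (∫ l in {l : ℝ | α < Real.exp (-(t * (1 + l ^ 2) / 4))}, w l) ^ δ ≤
        C' * Real.exp (-t / 4) * max
          (sSup ((fun x : ℝ => Real.exp (-t * x ^ 2) * x ^ δ) '' Set.Ioc (0 : ℝ) (1 / 2)))
          (sSup ((fun x : ℝ => Real.exp (-t * x ^ 2) * x ^ (2 * δ)) '' Set.Ici (1 / 2 : ℝ))) :=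
  heat_symbol_weak_estimate_odd_general C δ hC hδ0
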